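/- Assume the Lagrangian L has at least one saddle point, each g_{ji} is Lipschitz continuous on X_i with modulus L_{ji}, and let 0 < ε < 1 and 0 < ρ ≤ min{(1−ε)/(A_max + M·L_max), (1−ε)/(N·A_max), (1−ε)/(N·L_max)}. Let (x^k, λ^k, μ^k)_{k≥0} be generated by the N-block PCPM iteration with step size ρ from an arbitrary starting point (x^0, λ^0, μ^0) with x_i^0 ∈ X_i and μ^0 ∈ ℝ^M_{≥0}. Then the sequence converges: there exists a saddle point (x^∞, λ^∞, μ^∞) of L such that x_i^k → x_i^∞ for each i, λ^k → λ^∞, and μ^k → μ^∞ as k → ∞. -/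

import Mathlib

/-!
Let `V` be the squared Euclidean distance from `(xᵏ, λᵏ, μᵏ)` to a saddle point. Summing the
three-point inequalities of the proximal steps and using the two saddle inequalities bounds
`L(xᵏ⁺¹, γᵏ⁺¹, νᵏ⁺¹) - L(xᵏ⁺¹, λ*, μ*)`, which is linear in the multipliers. The `λ`-part is
compared with the corrector by polarization, the `μ`-part by the projection inequality for
`max 0`; the price of predicting from `xᵏ` instead of `xᵏ⁺¹` is controlled by `A_max` and the
Lipschitz constants and absorbed by the step-size condition. Hence `V` decreases by at least
`ε / (ε + 2)` times the squared length of the step (Fejér monotonicity). The iterates are therefore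
bounded with square-summable steps, so some subsequence converges to a point where predictor and
corrector coincide, i.e. to a saddle point, and Fejér monotonicity with respect to that point
forces the whole sequence to converge to it.
-/

open scoped BigOperators

noncomputable def lagrangian {N M m : ℕ} {n : Fin N → ℕ}
    (f : ∀ i, EuclideanSpace ℝ (Fin (n i)) → ℝ)
    (A : ∀ i, EuclideanSpace ℝ (Fin (n i)) →L[ℝ] EuclideanSpace ℝ (Fin m))
    (b : EuclideanSpace ℝ (Fin m))
    (g : Fin M → ∀ i, EuclideanSpace ℝ (Fin (n i)) → ℝ)
    (x : ∀ i, EuclideanSpace ℝ (Fin (n i)))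
    (lam : EuclideanSpace ℝ (Fin m)) (mu : EuclideanSpace ℝ (Fin M)) : ℝ :=
  (∑ i, f i (x i)) + (inner ℝ lam ((∑ i, A i (x i)) - b) : ℝ)
    + ∑ j, mu j * ∑ i, g j i (x i)

noncomputable def IsSaddlePoint {N M m : ℕ} {n : Fin N → ℕ}
    (f : ∀ i, EuclideanSpace ℝ (Fin (n i)) → ℝ)
    (A : ∀ i, EuclideanSpace ℝ (Fin (n i)) →L[ℝ] EuclideanSpace ℝ (Fin m))
    (b : EuclideanSpace ℝ (Fin m))
    (g : Fin M → ∀ i, EuclideanSpace ℝ (Fin (n i)) → ℝ)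
    (X : ∀ i, Set (EuclideanSpace ℝ (Fin (n i))))
    (xs : ∀ i, EuclideanSpace ℝ (Fin (n i)))
    (ls : EuclideanSpace ℝ (Fin m)) (ms : EuclideanSpace ℝ (Fin M)) : Prop :=
  (∀ i, xs i ∈ X i) ∧ (∀ j, 0 ≤ ms j) ∧
  (∀ (lam : EuclideanSpace ℝ (Fin m)) (mu : EuclideanSpace ℝ (Fin M)), (∀ j, 0 ≤ mu j) →
    lagrangian f A b g xs lam mu ≤ lagrangian f A b g xs ls ms) ∧
  (∀ x : ∀ i, EuclideanSpace ℝ (Fin (n i)), (∀ i, x i ∈ X i) →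
    lagrangian f A b g xs ls ms ≤ lagrangian f A b g x ls ms)

open Filter Topology Set

section Scalar

theorem max_zero_sub_mul_max_zero_sub_nonpos (p : ℝ) {c : ℝ} (hc : 0 ≤ c) :
    (max 0 p - c) * (max 0 p - p) ≤ 0 := by
  rcases le_total p 0 with hp | hp
  · rw [max_eq_left hp]; nlinarith
  · rw [max_eq_right hp, sub_self, mul_zero]

theorem max_zero_add_mul_sub_sq_le (a c u w : ℝ) {ρ ε : ℝ} (hε : 0 < ε) (hc : 0 ≤ c) :
    (max 0 (a + ρ * u) - c) ^ 2 - (a - c) ^ 2 + ε / (ε + 2) * (max 0 (a + ρ * u) - a) ^ 2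
      ≤ 2 * ρ * ((max 0 (a + ρ * w) - c) * u) + (1 + ε / 2) * ρ ^ 2 * (u - w) ^ 2 := by
  have hp := max_zero_sub_mul_max_zero_sub_nonpos (a + ρ * u) hc
  have hq := max_zero_sub_mul_max_zero_sub_nonpos (a + ρ * w) (le_max_left 0 (a + ρ * u))
  have hqp : (max 0 (a + ρ * w) - max 0 (a + ρ * u)) ^ 2 ≤ (ρ * (w - u)) ^ 2 := by
    rw [sq_le_sq, max_comm 0, max_comm 0]
    exact (abs_max_sub_max_le_abs _ _ 0).trans_eq (by ring_nf)
  set p := max 0 (a + ρ * u)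
  set q := max 0 (a + ρ * w)
  -- Young's inequality with weight `2 / ε`
  have young : ε / (ε + 2) * (p - a) ^ 2 ≤ (q - a) ^ 2 + ε / 2 * (q - p) ^ 2 := by
    rw [div_mul_eq_mul_div, div_le_iff₀ (by positivity)]
    nlinarith [sq_nonneg (2 * (q - a) - ε * (p - q))]
  nlinarith [sq_nonneg (q - p + ρ * (u - w))]

theorem complementary_of_eq_max_zero_add_mul {c q ρ : ℝ} (hρ : 0 < ρ)
    (h : c = max 0 (c + ρ * q)) : 0 ≤ c ∧ q ≤ 0 ∧ c * q = 0 := by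
  rcases le_total (c + ρ * q) 0 with hle | hge
  · rw [max_eq_left hle] at h
    subst h
    exact ⟨le_rfl, nonpos_of_mul_nonpos_right (by linarith) hρ, zero_mul q⟩
  · rw [max_eq_right hge] at h
    have hq : q = 0 := (mul_eq_zero.1 (by linarith : ρ * q = 0)).resolve_left hρ.ne'
    subst hq
    exact ⟨by linarith, le_rfl, mul_zero c⟩

end Scalar

section Prox

variable {E : Type*} [NormedAddCommGroup E] [InnerProductSpace ℝ E]

theorem ConvexOn.le_of_forall_le_add_mul_norm_sub_sq {X : Set E} {Φ : E → ℝ}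
    (hΦ : ConvexOn ℝ X Φ) {c : ℝ} {u y : E} (hu : u ∈ X) (hy : y ∈ X)
    (h : ∀ v ∈ X, Φ u ≤ Φ v + c * ‖v - u‖ ^ 2) : Φ u ≤ Φ y := by
  have hsegment : ∀ t ∈ Ioc (0 : ℝ) 1, Φ u ≤ Φ y + c * t * ‖y - u‖ ^ 2 := by
    rintro t ⟨ht0, ht1⟩
    have hpen := h _ (hΦ.1 hu hy (sub_nonneg.2 ht1) ht0.le (sub_add_cancel 1 t))
    have hconv := hΦ.2 hu hy (sub_nonneg.2 ht1) ht0.le (sub_add_cancel 1 t)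
    rw [show (1 - t) • u + t • y - u = t • (y - u) by module, norm_smul, mul_pow,
      Real.norm_eq_abs, sq_abs] at hpen
    rw [smul_eq_mul, smul_eq_mul] at hconv
    refine le_of_mul_le_mul_left ?_ ht0
    nlinarith
  have hlim : Tendsto (fun t => Φ y + c * t * ‖y - u‖ ^ 2) (𝓝[>] 0) (𝓝 (Φ y)) := by
    have hcont : Continuous fun t : ℝ => Φ y + c * t * ‖y - u‖ ^ 2 := by fun_prop
    simpa using (hcont.tendsto 0).mono_left nhdsWithin_le_nhds
  exact ge_of_tendsto hlim (mem_of_superset (Ioc_mem_nhdsGT one_pos) hsegment)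

theorem ConvexOn.add_mul_norm_sub_sq_le_of_prox {X : Set E} {F : E → ℝ}
    (hF : ConvexOn ℝ X F) {c : ℝ} {u w y : E} (hu : u ∈ X) (hy : y ∈ X)
    (hmin : ∀ v ∈ X, F u + c * ‖u - w‖ ^ 2 ≤ F v + c * ‖v - w‖ ^ 2) :
    F u + c * ‖u - w‖ ^ 2 + c * ‖u - y‖ ^ 2 ≤ F y + c * ‖y - w‖ ^ 2 := by
  -- the two quadratic terms of `Φ` cancel, so `Φ` is `F` plus an affine function
  set Φ : E → ℝ := fun v => F v + c * (‖v - w‖ ^ 2 - ‖v - u‖ ^ 2)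
  have hΦ : ConvexOn ℝ X Φ := by
    refine (hF.add ((((2 * c) • innerSL ℝ (u - w)).toLinearMap.convexOn hF.1).add_const
      (c * (‖w‖ ^ 2 - ‖u‖ ^ 2)))).congr fun v _ => ?_
    simp only [Φ, Pi.add_apply, ContinuousLinearMap.toLinearMap_smul, LinearMap.smul_apply,
      ContinuousLinearMap.coe_coe, innerSL_apply_apply, smul_eq_mul, norm_sub_sq_real,
      real_inner_comm v, inner_sub_right]
    ring
  have h := hΦ.le_of_forall_le_add_mul_norm_sub_sq (c := c) hu hy fun v hv => by
    simp only [Φ, sub_self, norm_zero]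
    linarith [hmin v hv]
  simp only [Φ, sub_self, norm_zero] at h
  rw [norm_sub_rev u y]
  linarith

end Prox

theorem two_mul_sum_mul_le {ι : Type*} (s : Finset ι) (a : ι → ℝ) (c : ℝ) :
    2 * (∑ i ∈ s, a i) * c ≤ ∑ i ∈ s, a i ^ 2 + s.card * c ^ 2 := by
  rw [Finset.mul_sum, Finset.sum_mul, ← nsmul_eq_mul, ← Finset.sum_const,
    ← Finset.sum_add_distrib]
  exact Finset.sum_le_sum fun i _ => two_mul_le_add_sq (a i) c

theorem summable_of_add_mul_le {D e : ℕ → ℝ} {c : ℝ} (hc : 0 < c) (hD : ∀ k, 0 ≤ D k)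
    (he : ∀ k, 0 ≤ e k) (h : ∀ k, D (k + 1) + c * e k ≤ D k) : Summable e := by
  refine summable_of_sum_range_le he (c := D 0 / c) fun K => ?_
  have htele : c * ∑ k ∈ Finset.range K, e k ≤ D 0 - D K := by
    induction K with
    | zero => simp
    | succ K ih => rw [Finset.sum_range_succ, mul_add]; linarith [h K]
  rw [le_div_iff₀ hc]
  linarith [hD K]

theorem Antitone.tendsto_zero_of_subseq {D : ℕ → ℝ} (hD : Antitone D) (hD0 : ∀ k, 0 ≤ D k)
    {φ : ℕ → ℕ} (hφ : Tendsto φ atTop atTop) (h : Tendsto (D ∘ φ) atTop (𝓝 0)) :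
    Tendsto D atTop (𝓝 0) := by
  have hinf := tendsto_atTop_ciInf hD ⟨0, forall_mem_range.2 hD0⟩
  rwa [tendsto_nhds_unique (hinf.comp hφ) h] at hinf

theorem exists_tendsto_of_fejer {α : Type*} [PseudoMetricSpace α] [ProperSpace α]
    {V : α → α → ℝ} (hV0 : ∀ z z', 0 ≤ V z z')
    (hVdist : ∀ z z', dist z z' ≤ √(V z z')) (hVcont : ∀ s, Continuous fun z => V z s)
    (hVself : ∀ s, V s s = 0) {S : Set α} (hS : S.Nonempty) {c : ℝ} (hc : 0 < c)
    {z : ℕ → α}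
    (hfejer : ∀ s ∈ S, ∀ k, V (z (k + 1)) s + c * V (z (k + 1)) (z k) ≤ V (z k) s)
    (hcluster : ∀ s (ψ : ℕ → ℕ), Tendsto (z ∘ ψ) atTop (𝓝 s) →
      Tendsto (fun l => z (ψ l + 1)) atTop (𝓝 s) → s ∈ S) :
    ∃ s ∈ S, Tendsto z atTop (𝓝 s) := by
  have hanti : ∀ s ∈ S, Antitone fun k => V (z k) s := fun s hs =>
    antitone_nat_of_succ_le fun k => by
      linarith [hfejer s hs k, mul_nonneg hc.le (hV0 (z (k + 1)) (z k))]
  obtain ⟨s₀, hs₀⟩ := hS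
  have hstep : Tendsto (fun k => dist (z (k + 1)) (z k)) atTop (𝓝 0) := by
    have hsum := summable_of_add_mul_le hc (fun k => hV0 (z k) s₀)
      (fun k => hV0 (z (k + 1)) (z k)) (hfejer s₀ hs₀)
    refine squeeze_zero (fun _ => dist_nonneg) (fun k => hVdist _ _) ?_
    simpa using hsum.tendsto_atTop_zero.sqrt
  have hbdd : ∀ k, z k ∈ Metric.closedBall s₀ √(V (z 0) s₀) := fun k =>
    (hVdist _ _).trans (Real.sqrt_le_sqrt (hanti s₀ hs₀ (Nat.zero_le k)))
  obtain ⟨s, -, φ, hφ, hzφ⟩ := tendsto_subseq_of_bounded Metric.isBounded_closedBall hbdd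
  have hzφ1 : Tendsto (fun l => z (φ l + 1)) atTop (𝓝 s) :=
    hzφ.congr_dist (by simpa [dist_comm, Function.comp_def] using hstep.comp hφ.tendsto_atTop)
  have hs := hcluster s φ hzφ hzφ1
  have hVs : Tendsto (fun k => V (z k) s) atTop (𝓝 0) := by
    refine (hanti s hs).tendsto_zero_of_subseq (fun k => hV0 _ _) hφ.tendsto_atTop ?_
    rw [← hVself s]
    exact ((hVcont s).tendsto s).comp hzφ
  refine ⟨s, hs, tendsto_iff_dist_tendsto_zero.2 ?_⟩
  refine squeeze_zero (fun _ => dist_nonneg) (fun k => hVdist _ _) ?_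
  simpa using hVs.sqrt

section SqDist

variable {ι : Type*} [Fintype ι] {E : ι → Type*} [∀ i, SeminormedAddCommGroup (E i)]
  {F G : Type*} [SeminormedAddCommGroup F] [SeminormedAddCommGroup G]

-- Pi and product types carry sup metrics; the Fejér quantity is the Euclidean one.
def sqDist (z z' : (∀ i, E i) × F × G) : ℝ :=
  ∑ i, ‖z.1 i - z'.1 i‖ ^ 2 + ‖z.2.1 - z'.2.1‖ ^ 2 + ‖z.2.2 - z'.2.2‖ ^ 2

theorem sqDist_nonneg (z z' : (∀ i, E i) × F × G) : 0 ≤ sqDist z z' := by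
  unfold sqDist; positivity

theorem sqDist_self (z : (∀ i, E i) × F × G) : sqDist z z = 0 := by
  simp [sqDist]

theorem continuous_sqDist_left (s : (∀ i, E i) × F × G) : Continuous fun z => sqDist z s := by
  unfold sqDist; fun_prop

theorem dist_le_sqrt_sqDist (z z' : (∀ i, E i) × F × G) : dist z z' ≤ √(sqDist z z') := by
  have hsum := Finset.sum_nonneg fun i (_ : i ∈ Finset.univ) => sq_nonneg ‖z.1 i - z'.1 i‖
  have hl := sq_nonneg ‖z.2.1 - z'.2.1‖
  have hm := sq_nonneg ‖z.2.2 - z'.2.2‖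
  rw [Prod.dist_eq, Prod.dist_eq, dist_eq_norm z.2.1, dist_eq_norm z.2.2]
  refine max_le ((dist_pi_le_iff (Real.sqrt_nonneg _)).2 fun i => ?_)
    (max_le (Real.le_sqrt_of_sq_le ?_) (Real.le_sqrt_of_sq_le ?_))
  · have := Finset.single_le_sum (fun i _ => sq_nonneg ‖z.1 i - z'.1 i‖) (Finset.mem_univ i)
    rw [dist_eq_norm]
    exact Real.le_sqrt_of_sq_le (by unfold sqDist; linarith)
  all_goals unfold sqDist; linarith

end SqDist

section Lagrangian

variable {N M m : ℕ} {n : Fin N → ℕ}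
  {f : ∀ i, EuclideanSpace ℝ (Fin (n i)) → ℝ}
  {A : ∀ i, EuclideanSpace ℝ (Fin (n i)) →L[ℝ] EuclideanSpace ℝ (Fin m)}
  {b : EuclideanSpace ℝ (Fin m)}
  {g : Fin M → ∀ i, EuclideanSpace ℝ (Fin (n i)) → ℝ}
  {X : ∀ i, Set (EuclideanSpace ℝ (Fin (n i)))}

variable (f A g) in
noncomputable def blockLagrangian (i : Fin N) (lam : EuclideanSpace ℝ (Fin m))
    (mu : EuclideanSpace ℝ (Fin M)) (z : EuclideanSpace ℝ (Fin (n i))) : ℝ :=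
  f i z + inner ℝ lam (A i z) + ∑ j, mu j * g j i z

variable (f A b g) in
theorem lagrangian_eq_sum_blockLagrangian (x : ∀ i, EuclideanSpace ℝ (Fin (n i)))
    (lam : EuclideanSpace ℝ (Fin m)) (mu : EuclideanSpace ℝ (Fin M)) :
    lagrangian f A b g x lam mu
      = ∑ i, blockLagrangian f A g i lam mu (x i) - inner ℝ lam b := by
  simp only [lagrangian, blockLagrangian, Finset.sum_add_distrib, inner_sub_right, inner_sum,
    Finset.mul_sum]
  rw [Finset.sum_comm]
  ring

variable (f A b g) in
theorem lagrangian_sub_lagrangian (x : ∀ i, EuclideanSpace ℝ (Fin (n i)))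
    (lam lam' : EuclideanSpace ℝ (Fin m)) (mu mu' : EuclideanSpace ℝ (Fin M)) :
    lagrangian f A b g x lam mu - lagrangian f A b g x lam' mu'
      = inner ℝ (lam - lam') ((∑ i, A i (x i)) - b)
        + ∑ j, (mu j - mu' j) * ∑ i, g j i (x i) := by
  simp only [lagrangian, inner_sub_left, sub_mul, Finset.sum_sub_distrib]
  ring

theorem convexOn_blockLagrangian (hf : ∀ i, ConvexOn ℝ univ (f i))
    (hg : ∀ j i, ConvexOn ℝ univ (g j i)) (i : Fin N) (lam : EuclideanSpace ℝ (Fin m))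
    {mu : EuclideanSpace ℝ (Fin M)} (hmu : ∀ j, 0 ≤ mu j) :
    ConvexOn ℝ univ (blockLagrangian f A g i lam mu) := by
  have hsum : ConvexOn ℝ univ (∑ j, fun z => mu j * g j i z) :=
    Finset.sum_induction _ (ConvexOn ℝ univ) (fun _ _ => ConvexOn.add)
      (convexOn_const 0 convex_univ) fun j _ => (hg j i).smul (hmu j)
  have hlin : ConvexOn ℝ univ fun z => inner ℝ lam (A i z) :=
    ((innerSL ℝ lam).comp (A i)).toLinearMap.convexOn convex_univ
  refine ((hf i).add hlin).add hsum |>.congr fun z _ => ?_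
  simp [blockLagrangian, Finset.sum_apply]

theorem lagrangian_le_of_feasible {x : ∀ i, EuclideanSpace ℝ (Fin (n i))}
    (hAx : ∑ i, A i (x i) = b) (hgx : ∀ j, ∑ i, g j i (x i) ≤ 0)
    {lam lam' : EuclideanSpace ℝ (Fin m)} {mu mu' : EuclideanSpace ℝ (Fin M)}
    (hmu : ∀ j, 0 ≤ mu j) (hmu' : ∀ j, mu' j * ∑ i, g j i (x i) = 0) :
    lagrangian f A b g x lam mu ≤ lagrangian f A b g x lam' mu' := by
  have h := lagrangian_sub_lagrangian f A b g x lam lam' mu mu'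
  simp only [hAx, sub_self, inner_zero_right, zero_add, sub_mul, hmu', sub_zero] at h
  have : ∑ j, mu j * ∑ i, g j i (x i) ≤ 0 :=
    Finset.sum_nonpos fun j _ => mul_nonpos_of_nonneg_of_nonpos (hmu j) (hgx j)
  linarith

theorem Filter.Tendsto.blockLagrangian {α : Type*} {F : Filter α}
    (hf : ∀ i, Continuous (f i)) (hg : ∀ j i, Continuous (g j i)) {i : Fin N}
    {lam : α → EuclideanSpace ℝ (Fin m)} {mu : α → EuclideanSpace ℝ (Fin M)}
    {z : α → EuclideanSpace ℝ (Fin (n i))} {lam₀ : EuclideanSpace ℝ (Fin m)}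
    {mu₀ : EuclideanSpace ℝ (Fin M)} {z₀ : EuclideanSpace ℝ (Fin (n i))}
    (hlam : Tendsto lam F (𝓝 lam₀)) (hmu : ∀ j, Tendsto (fun a => mu a j) F (𝓝 (mu₀ j)))
    (hz : Tendsto z F (𝓝 z₀)) :
    Tendsto (fun a => blockLagrangian f A g i (lam a) (mu a) (z a)) F
      (𝓝 (blockLagrangian f A g i lam₀ mu₀ z₀)) :=
  (((hf i).tendsto _).comp hz |>.add (hlam.inner (((A i).continuous.tendsto _).comp hz))).add
    (tendsto_finsetSum _ fun j _ => (hmu j).mul (((hg j i).tendsto _).comp hz))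

theorem sq_sum_sub_sum_le {Lc : Fin M → Fin N → ℝ}
    (hLip : ∀ j i, ∀ y ∈ X i, ∀ z ∈ X i, |g j i y - g j i z| ≤ Lc j i * ‖y - z‖)
    {Lmax : ℝ} (hLmax : ∀ j i, Lc j i ≤ Lmax) {y z : ∀ i, EuclideanSpace ℝ (Fin (n i))}
    (hy : ∀ i, y i ∈ X i) (hz : ∀ i, z i ∈ X i) (j : Fin M) :
    (∑ i, g j i (y i) - ∑ i, g j i (z i)) ^ 2
      ≤ N * Lmax ^ 2 * ∑ i, ‖y i - z i‖ ^ 2 := by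
  have habs : |∑ i, g j i (y i) - ∑ i, g j i (z i)| ≤ Lmax * ∑ i, ‖y i - z i‖ := by
    rw [← Finset.sum_sub_distrib, Finset.mul_sum]
    exact (Finset.abs_sum_le_sum_abs _ _).trans (Finset.sum_le_sum fun i _ =>
      (hLip j i _ (hy i) _ (hz i)).trans
        (mul_le_mul_of_nonneg_right (hLmax j i) (norm_nonneg _)))
  have hcs := sq_sum_le_card_mul_sum_sq (s := Finset.univ) (f := fun i => ‖y i - z i‖)
  rw [Finset.card_univ, Fintype.card_fin] at hcs
  calc _ = |∑ i, g j i (y i) - ∑ i, g j i (z i)| ^ 2 := (sq_abs _).symm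
    _ ≤ Lmax ^ 2 * (∑ i, ‖y i - z i‖) ^ 2 := by
      rw [← mul_pow]; exact pow_le_pow_left₀ (abs_nonneg _) habs 2
    _ ≤ _ := by nlinarith [sq_nonneg Lmax]

variable (f A b g X) in
structure IsPCPMIterate (ρ : ℝ) (x : ℕ → ∀ i, EuclideanSpace ℝ (Fin (n i)))
    (lam : ℕ → EuclideanSpace ℝ (Fin m)) (mu : ℕ → EuclideanSpace ℝ (Fin M))
    (γ : ℕ → EuclideanSpace ℝ (Fin m)) (ν : ℕ → EuclideanSpace ℝ (Fin M)) : Prop where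
  mem : ∀ k i, x k i ∈ X i
  predictor_lam : ∀ k, γ (k + 1) = lam k + ρ • ((∑ i, A i (x k i)) - b)
  predictor_mu : ∀ k j, ν (k + 1) j = max 0 (mu k j + ρ * ∑ i, g j i (x k i))
  prox_min : ∀ k i, ∀ y ∈ X i,
    blockLagrangian f A g i (γ (k + 1)) (ν (k + 1)) (x (k + 1) i)
        + 1 / (2 * ρ) * ‖x (k + 1) i - x k i‖ ^ 2
      ≤ blockLagrangian f A g i (γ (k + 1)) (ν (k + 1)) y + 1 / (2 * ρ) * ‖y - x k i‖ ^ 2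
  corrector_lam : ∀ k, lam (k + 1) = lam k + ρ • ((∑ i, A i (x (k + 1) i)) - b)
  corrector_mu : ∀ k j, mu (k + 1) j = max 0 (mu k j + ρ * ∑ i, g j i (x (k + 1) i))

end Lagrangian

namespace IsPCPMIterate

variable {N M m : ℕ} {n : Fin N → ℕ}
  {f : ∀ i, EuclideanSpace ℝ (Fin (n i)) → ℝ}
  {A : ∀ i, EuclideanSpace ℝ (Fin (n i)) →L[ℝ] EuclideanSpace ℝ (Fin m)}
  {b : EuclideanSpace ℝ (Fin m)}
  {g : Fin M → ∀ i, EuclideanSpace ℝ (Fin (n i)) → ℝ}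
  {X : ∀ i, Set (EuclideanSpace ℝ (Fin (n i)))}
  {ρ : ℝ} {x : ℕ → ∀ i, EuclideanSpace ℝ (Fin (n i))}
  {lam : ℕ → EuclideanSpace ℝ (Fin m)} {mu : ℕ → EuclideanSpace ℝ (Fin M)}
  {γ : ℕ → EuclideanSpace ℝ (Fin m)} {ν : ℕ → EuclideanSpace ℝ (Fin M)}

theorem predictor_mu_nonneg (hP : IsPCPMIterate f A b g X ρ x lam mu γ ν) (k : ℕ) (j : Fin M) :
    0 ≤ ν (k + 1) j :=
  (hP.predictor_mu k j).symm ▸ le_max_left _ _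

theorem prox_three_point (hP : IsPCPMIterate f A b g X ρ x lam mu γ ν)
    (hX : ∀ i, Convex ℝ (X i)) (hf : ∀ i, ConvexOn ℝ univ (f i))
    (hg : ∀ j i, ConvexOn ℝ univ (g j i)) (k : ℕ) (i : Fin N) {y} (hy : y ∈ X i) :
    blockLagrangian f A g i (γ (k + 1)) (ν (k + 1)) (x (k + 1) i)
        + 1 / (2 * ρ) * ‖x (k + 1) i - x k i‖ ^ 2 + 1 / (2 * ρ) * ‖x (k + 1) i - y‖ ^ 2
      ≤ blockLagrangian f A g i (γ (k + 1)) (ν (k + 1)) y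
        + 1 / (2 * ρ) * ‖y - x k i‖ ^ 2 :=
  ((convexOn_blockLagrangian (A := A) hf hg i _ (hP.predictor_mu_nonneg k)).subset
    (subset_univ _) (hX i)).add_mul_norm_sub_sq_le_of_prox (hP.mem (k + 1) i) hy (hP.prox_min k i)

theorem two_mul_lagrangian_add_le (hP : IsPCPMIterate f A b g X ρ x lam mu γ ν) (hρ : 0 < ρ)
    (hX : ∀ i, Convex ℝ (X i)) (hf : ∀ i, ConvexOn ℝ univ (f i))
    (hg : ∀ j i, ConvexOn ℝ univ (g j i)) (k : ℕ) {y : ∀ i, EuclideanSpace ℝ (Fin (n i))}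
    (hy : ∀ i, y i ∈ X i) :
    2 * ρ * lagrangian f A b g (x (k + 1)) (γ (k + 1)) (ν (k + 1))
        + ∑ i, ‖x (k + 1) i - x k i‖ ^ 2 + ∑ i, ‖x (k + 1) i - y i‖ ^ 2
      ≤ 2 * ρ * lagrangian f A b g y (γ (k + 1)) (ν (k + 1))
        + ∑ i, ‖y i - x k i‖ ^ 2 := by
  have h := Finset.sum_le_sum fun i (_ : i ∈ Finset.univ) =>
    hP.prox_three_point hX hf hg k i (hy i)
  simp only [Finset.sum_add_distrib, ← Finset.mul_sum] at h
  rw [lagrangian_eq_sum_blockLagrangian, lagrangian_eq_sum_blockLagrangian]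
  have h2ρ : 2 * ρ * (1 / (2 * ρ)) = 1 := by field_simp
  linear_combination (2 * ρ) * h - (∑ i, ‖x (k + 1) i - x k i‖ ^ 2
    + ∑ i, ‖x (k + 1) i - y i‖ ^ 2 - ∑ i, ‖y i - x k i‖ ^ 2) * h2ρ

theorem norm_sq_lam_sub_le_inner (hP : IsPCPMIterate f A b g X ρ x lam mu γ ν) (hρ : 0 ≤ ρ)
    {Amax : ℝ} (hA0 : 0 ≤ Amax) (hAmax : ∀ i, ‖A i‖ ≤ Amax) (k : ℕ)
    (ls : EuclideanSpace ℝ (Fin m)) :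
    ‖lam (k + 1) - ls‖ ^ 2 - ‖lam k - ls‖ ^ 2 + ‖lam (k + 1) - lam k‖ ^ 2
        - ρ * Amax * (∑ i, ‖x (k + 1) i - x k i‖ ^ 2 + N * ‖lam (k + 1) - lam k‖ ^ 2)
      ≤ 2 * ρ * inner ℝ (γ (k + 1) - ls) ((∑ i, A i (x (k + 1) i)) - b) := by
  set T := ∑ i, A i (x k i - x (k + 1) i)
  have hstep : ρ • ((∑ i, A i (x (k + 1) i)) - b) = lam (k + 1) - lam k := by
    rw [hP.corrector_lam k, add_sub_cancel_left]
  have hγ : γ (k + 1) - lam (k + 1) = ρ • T := by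
    simp only [T, map_sub, Finset.sum_sub_distrib, hP.predictor_lam k, hP.corrector_lam k]
    module
  have hT : ‖T‖ ≤ Amax * ∑ i, ‖x (k + 1) i - x k i‖ := by
    rw [Finset.mul_sum]
    refine (norm_sum_le _ _).trans (Finset.sum_le_sum fun i _ => ?_)
    rw [norm_sub_rev]
    exact ((A i).le_opNorm _).trans (mul_le_mul_of_nonneg_right (hAmax i) (norm_nonneg _))
  have hcross :
      -(ρ * Amax * (∑ i, ‖x (k + 1) i - x k i‖ ^ 2 + N * ‖lam (k + 1) - lam k‖ ^ 2))
        ≤ 2 * ρ * inner ℝ T (lam (k + 1) - lam k) := by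
    have hamgm := two_mul_sum_mul_le Finset.univ (fun i => ‖x (k + 1) i - x k i‖)
      ‖lam (k + 1) - lam k‖
    rw [Finset.card_univ, Fintype.card_fin] at hamgm
    have hcs := abs_real_inner_le_norm T (lam (k + 1) - lam k)
    nlinarith [neg_abs_le (inner ℝ T (lam (k + 1) - lam k)), mul_nonneg hρ hA0,
      mul_le_mul_of_nonneg_right hT (norm_nonneg (lam (k + 1) - lam k))]
  have hpolar := norm_sub_sq_real (lam (k + 1) - ls) (lam (k + 1) - lam k)
  rw [sub_sub_sub_cancel_left] at hpolar
  have hsplit : 2 * ρ * inner ℝ (γ (k + 1) - ls) ((∑ i, A i (x (k + 1) i)) - b)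
      = 2 * ρ * inner ℝ T (lam (k + 1) - lam k)
        + 2 * inner ℝ (lam (k + 1) - ls) (lam (k + 1) - lam k) := by
    calc _ = 2 * inner ℝ (γ (k + 1) - ls) (ρ • ((∑ i, A i (x (k + 1) i)) - b)) := by
          rw [real_inner_smul_right]; ring
      _ = 2 * inner ℝ ((γ (k + 1) - lam (k + 1)) + (lam (k + 1) - ls))
            (lam (k + 1) - lam k) := by
          rw [hstep, sub_add_sub_cancel]
      _ = _ := by rw [hγ, inner_add_left, real_inner_smul_left]; ring
  linarith

theorem norm_sq_mu_sub_le_sum (hP : IsPCPMIterate f A b g X ρ x lam mu γ ν) {ε : ℝ}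
    (hε : 0 < ε) {Lc : Fin M → Fin N → ℝ}
    (hLip : ∀ j i, ∀ y ∈ X i, ∀ z ∈ X i, |g j i y - g j i z| ≤ Lc j i * ‖y - z‖)
    {Lmax : ℝ} (hLmax : ∀ j i, Lc j i ≤ Lmax) (k : ℕ) {ms : EuclideanSpace ℝ (Fin M)}
    (hms : ∀ j, 0 ≤ ms j) :
    ‖mu (k + 1) - ms‖ ^ 2 - ‖mu k - ms‖ ^ 2 + ε / (ε + 2) * ‖mu (k + 1) - mu k‖ ^ 2
        - (1 + ε / 2) * ρ ^ 2 * (M * (N * Lmax ^ 2 * ∑ i, ‖x (k + 1) i - x k i‖ ^ 2))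
      ≤ 2 * ρ * ∑ j, (ν (k + 1) j - ms j) * ∑ i, g j i (x (k + 1) i) := by
  have hj : ∀ j, (mu (k + 1) j - ms j) ^ 2 - (mu k j - ms j) ^ 2
        + ε / (ε + 2) * (mu (k + 1) j - mu k j) ^ 2
        - (1 + ε / 2) * ρ ^ 2 * (N * Lmax ^ 2 * ∑ i, ‖x (k + 1) i - x k i‖ ^ 2)
      ≤ 2 * ρ * ((ν (k + 1) j - ms j) * ∑ i, g j i (x (k + 1) i)) := by
    intro j
    have h := max_zero_add_mul_sub_sq_le (ρ := ρ) (mu k j) (ms j) (∑ i, g j i (x (k + 1) i))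
      (∑ i, g j i (x k i)) hε (hms j)
    rw [← hP.corrector_mu, ← hP.predictor_mu] at h
    have hL := mul_le_mul_of_nonneg_left
      (sq_sum_sub_sum_le hLip hLmax (hP.mem (k + 1)) (hP.mem k) j)
      (by positivity : 0 ≤ (1 + ε / 2) * ρ ^ 2)
    linarith
  have h := Finset.sum_le_sum fun j (_ : j ∈ Finset.univ) => hj j
  simp only [Finset.sum_sub_distrib, Finset.sum_add_distrib, ← Finset.mul_sum, Finset.sum_const,
    Finset.card_univ, Fintype.card_fin, nsmul_eq_mul] at h
  have hnorm (u v : EuclideanSpace ℝ (Fin M)) : ‖u - v‖ ^ 2 = ∑ j, (u j - v j) ^ 2 := by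
    rw [EuclideanSpace.real_norm_sq_eq]; rfl
  rw [hnorm, hnorm, hnorm]
  linarith

theorem sqDist_succ_add_le (hP : IsPCPMIterate f A b g X ρ x lam mu γ ν) (hρ : 0 < ρ)
    (hX : ∀ i, Convex ℝ (X i)) (hf : ∀ i, ConvexOn ℝ univ (f i))
    (hg : ∀ j i, ConvexOn ℝ univ (g j i)) {Lc : Fin M → Fin N → ℝ}
    (hLip : ∀ j i, ∀ y ∈ X i, ∀ z ∈ X i, |g j i y - g j i z| ≤ Lc j i * ‖y - z‖)
    {Amax Lmax : ℝ} (hAmax : ∀ i, ‖A i‖ ≤ Amax) (hLmax : ∀ j i, Lc j i ≤ Lmax)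
    (hA0 : 0 ≤ Amax) (hL0 : 0 ≤ Lmax) {ε : ℝ} (hε : 0 < ε)
    (hρ1 : ρ * (Amax + M * Lmax) ≤ 1 - ε) (hρ2 : ρ * (N * Amax) ≤ 1 - ε)
    (hρ3 : ρ * (N * Lmax) ≤ 1 - ε) {xs : ∀ i, EuclideanSpace ℝ (Fin (n i))}
    {ls : EuclideanSpace ℝ (Fin m)} {ms : EuclideanSpace ℝ (Fin M)}
    (hs : IsSaddlePoint f A b g X xs ls ms) (k : ℕ) :
    sqDist (x (k + 1), lam (k + 1), mu (k + 1)) (xs, ls, ms)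
        + ε / (ε + 2) * sqDist (x (k + 1), lam (k + 1), mu (k + 1)) (x k, lam k, mu k)
      ≤ sqDist (x k, lam k, mu k) (xs, ls, ms) := by
  obtain ⟨hxs, hms, hdual, hprimal⟩ := hs
  have hprox := hP.two_mul_lagrangian_add_le hρ hX hf hg k hxs
  have hsaddle := mul_le_mul_of_nonneg_left
    ((hdual (γ (k + 1)) (ν (k + 1)) (hP.predictor_mu_nonneg k)).trans
      (hprimal (x (k + 1)) (hP.mem (k + 1)))) (by positivity : 0 ≤ 2 * ρ)
  have hgap := congrArg (2 * ρ * ·)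
    (lagrangian_sub_lagrangian f A b g (x (k + 1)) (γ (k + 1)) ls (ν (k + 1)) ms)
  simp only [mul_sub, mul_add] at hgap
  have hlam := hP.norm_sq_lam_sub_le_inner hρ.le hA0 hAmax k ls
  have hmu := hP.norm_sq_mu_sub_le_sum hε hLip hLmax k hms
  have hrev : ∑ i, ‖xs i - x k i‖ ^ 2 = ∑ i, ‖x k i - xs i‖ ^ 2 := by
    simp_rw [norm_sub_rev (xs _)]
  set dX := ∑ i, ‖x (k + 1) i - x k i‖ ^ 2
  set dL := ‖lam (k + 1) - lam k‖ ^ 2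
  set dM := ‖mu (k + 1) - mu k‖ ^ 2
  have hκ : ε / (ε + 2) ≤ ε := div_le_self hε.le (by linarith)
  have hcoef : ρ * Amax + (1 + ε / 2) * ρ ^ 2 * (M * (N * Lmax ^ 2)) ≤ 1 - ε := by
    have hp : 0 ≤ ρ * (M * Lmax) := by positivity
    nlinarith [mul_le_mul_of_nonneg_left hρ3 hp, mul_nonneg hp (sq_nonneg ε)]
  have hX' := mul_le_mul_of_nonneg_right (hκ.trans (le_sub_comm.1 hcoef))
    (by positivity : 0 ≤ dX)
  have hL' := mul_le_mul_of_nonneg_right (hκ.trans (le_sub_comm.1 hρ2))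
    (by positivity : 0 ≤ dL)
  dsimp only [sqDist]
  linarith

section Limit

variable {ψ : ℕ → ℕ} {xinf : ∀ i, EuclideanSpace ℝ (Fin (n i))}
  {linf : EuclideanSpace ℝ (Fin m)} {minf : EuclideanSpace ℝ (Fin M)}

theorem fixedPoint_of_tendsto (hP : IsPCPMIterate f A b g X ρ x lam mu γ ν) (hρ : ρ ≠ 0)
    (hg : ∀ j i, Continuous (g j i))
    (hx1 : ∀ i, Tendsto (fun l => x (ψ l + 1) i) atTop (𝓝 (xinf i)))
    (hl : Tendsto (fun l => lam (ψ l)) atTop (𝓝 linf))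
    (hl1 : Tendsto (fun l => lam (ψ l + 1)) atTop (𝓝 linf))
    (hm : ∀ j, Tendsto (fun l => mu (ψ l) j) atTop (𝓝 (minf j)))
    (hm1 : ∀ j, Tendsto (fun l => mu (ψ l + 1) j) atTop (𝓝 (minf j))) :
    ∑ i, A i (xinf i) = b ∧ ∀ j, minf j = max 0 (minf j + ρ * ∑ i, g j i (xinf i)) := by
  constructor
  · have h : Tendsto (fun l => lam (ψ l + 1)) atTop
        (𝓝 (linf + ρ • ((∑ i, A i (xinf i)) - b))) := by
      simp only [hP.corrector_lam]
      exact hl.add (((tendsto_finsetSum Finset.univ fun i _ =>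
        ((A i).continuous.tendsto _).comp (hx1 i)).sub_const b).const_smul ρ)
    have heq := tendsto_nhds_unique hl1 h
    rwa [left_eq_add, smul_eq_zero, sub_eq_zero, or_iff_right hρ] at heq
  · intro j
    have h : Tendsto (fun l => mu (ψ l + 1) j) atTop
        (𝓝 (max 0 (minf j + ρ * ∑ i, g j i (xinf i)))) := by
      simp only [hP.corrector_mu]
      exact tendsto_const_nhds.max ((hm j).add ((tendsto_finsetSum Finset.univ fun i _ =>
        ((hg j i).tendsto _).comp (hx1 i)).const_mul ρ))
    exact tendsto_nhds_unique (hm1 j) h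

theorem blockLagrangian_le_of_tendsto (hP : IsPCPMIterate f A b g X ρ x lam mu γ ν)
    (hX : ∀ i, Convex ℝ (X i)) (hf : ∀ i, Continuous (f i) ∧ ConvexOn ℝ univ (f i))
    (hg : ∀ j i, Continuous (g j i) ∧ ConvexOn ℝ univ (g j i))
    (hx : ∀ i, Tendsto (fun l => x (ψ l) i) atTop (𝓝 (xinf i)))
    (hx1 : ∀ i, Tendsto (fun l => x (ψ l + 1) i) atTop (𝓝 (xinf i)))
    (hγ : Tendsto (fun l => γ (ψ l + 1)) atTop (𝓝 linf))
    (hν : ∀ j, Tendsto (fun l => ν (ψ l + 1) j) atTop (𝓝 (minf j))) (i : Fin N)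
    {y : EuclideanSpace ℝ (Fin (n i))} (hy : y ∈ X i) :
    blockLagrangian f A g i linf minf (xinf i) ≤ blockLagrangian f A g i linf minf y := by
  have hcont := fun i => (hf i).1
  have hgcont := fun j i => (hg j i).1
  have hlim := le_of_tendsto_of_tendsto'
    (((hγ.blockLagrangian hcont hgcont hν (hx1 i)).add
      ((((hx1 i).sub (hx i)).norm.pow 2).const_mul (1 / (2 * ρ)))).add
      ((((hx1 i).sub_const y).norm.pow 2).const_mul (1 / (2 * ρ))))
    ((hγ.blockLagrangian hcont hgcont hν tendsto_const_nhds).add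
      (((tendsto_const_nhds.sub (hx i)).norm.pow 2).const_mul (1 / (2 * ρ))))
    fun l => hP.prox_three_point hX (fun i => (hf i).2) (fun j i => (hg j i).2) (ψ l) i hy
  -- in the limit the two distance terms to `y` cancel
  rw [sub_self, norm_zero, norm_sub_rev y] at hlim
  linarith

theorem isSaddlePoint_of_tendsto (hP : IsPCPMIterate f A b g X ρ x lam mu γ ν) (hρ : 0 < ρ)
    (hX : ∀ i, IsClosed (X i) ∧ Convex ℝ (X i))
    (hf : ∀ i, Continuous (f i) ∧ ConvexOn ℝ univ (f i))
    (hg : ∀ j i, Continuous (g j i) ∧ ConvexOn ℝ univ (g j i))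
    (h0 : Tendsto (fun l => (x (ψ l), lam (ψ l), mu (ψ l))) atTop (𝓝 (xinf, linf, minf)))
    (h1 : Tendsto (fun l => (x (ψ l + 1), lam (ψ l + 1), mu (ψ l + 1))) atTop
      (𝓝 (xinf, linf, minf))) :
    IsSaddlePoint f A b g X xinf linf minf := by
  have hx := tendsto_pi_nhds.1 h0.fst_nhds
  have hx1 := tendsto_pi_nhds.1 h1.fst_nhds
  have hcoord (j : Fin M) : Continuous fun v : EuclideanSpace ℝ (Fin M) => v j := by fun_prop
  have hm (j : Fin M) := ((hcoord j).tendsto _).comp h0.snd_nhds.snd_nhds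
  have hm1 (j : Fin M) := ((hcoord j).tendsto _).comp h1.snd_nhds.snd_nhds
  obtain ⟨hAx, hfix⟩ := hP.fixedPoint_of_tendsto hρ.ne' (fun j i => (hg j i).1) hx1
    h0.snd_nhds.fst_nhds h1.snd_nhds.fst_nhds hm hm1
  have hcompl (j : Fin M) := complementary_of_eq_max_zero_add_mul hρ (hfix j)
  have hγ : Tendsto (fun l => γ (ψ l + 1)) atTop (𝓝 linf) := by
    simp only [hP.predictor_lam]
    simpa [hAx] using h0.snd_nhds.fst_nhds.add (((tendsto_finsetSum Finset.univ fun i _ =>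
      ((A i).continuous.tendsto _).comp (hx i)).sub_const b).const_smul ρ)
  have hν (j : Fin M) : Tendsto (fun l => ν (ψ l + 1) j) atTop (𝓝 (minf j)) := by
    simp only [hP.predictor_mu]
    rw [hfix j]
    exact tendsto_const_nhds.max ((hm j).add ((tendsto_finsetSum Finset.univ fun i _ =>
      ((hg j i).1.tendsto _).comp (hx i)).const_mul ρ))
  refine ⟨fun i => (hX i).1.mem_of_tendsto (hx i) (Eventually.of_forall fun l => hP.mem _ i),
    fun j => (hcompl j).1, fun _ _ hmu => lagrangian_le_of_feasible hAx (fun j => (hcompl j).2.1)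
      hmu fun j => (hcompl j).2.2, fun y hy => ?_⟩
  rw [lagrangian_eq_sum_blockLagrangian, lagrangian_eq_sum_blockLagrangian]
  gcongr with i
  exact hP.blockLagrangian_le_of_tendsto (fun i => (hX i).2) hf hg hx hx1 hγ hν i (hy i)

end Limit

end IsPCPMIterate

theorem stmt_8_general {N M m : ℕ} {n : Fin N → ℕ}
    (f : ∀ i, EuclideanSpace ℝ (Fin (n i)) → ℝ)
    (A : ∀ i, EuclideanSpace ℝ (Fin (n i)) →L[ℝ] EuclideanSpace ℝ (Fin m))
    (b : EuclideanSpace ℝ (Fin m))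
    (g : Fin M → ∀ i, EuclideanSpace ℝ (Fin (n i)) → ℝ)
    (X : ∀ i, Set (EuclideanSpace ℝ (Fin (n i))))
    (hX : ∀ i, IsClosed (X i) ∧ Convex ℝ (X i))
    (hf : ∀ i, Continuous (f i) ∧ ConvexOn ℝ Set.univ (f i))
    (hg : ∀ j i, Continuous (g j i) ∧ ConvexOn ℝ Set.univ (g j i))
    (Lc : Fin M → Fin N → ℝ)
    (hLip : ∀ j i, ∀ y ∈ X i, ∀ z ∈ X i, |g j i y - g j i z| ≤ Lc j i * ‖y - z‖)
    (Amax Lmax : ℝ) (hAmax : ∀ i, ‖A i‖ ≤ Amax) (hLmax : ∀ j i, Lc j i ≤ Lmax)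
    (ε : ℝ) (hε0 : 0 < ε) (hε1 : ε < 1)
    (ρ : ℝ) (hρ0 : 0 < ρ)
    (hρ1 : ρ ≤ (1 - ε) / (Amax + M * Lmax))
    (hρ2 : ρ ≤ (1 - ε) / (N * Amax))
    (hρ3 : ρ ≤ (1 - ε) / (N * Lmax))
    (x : ℕ → ∀ i, EuclideanSpace ℝ (Fin (n i)))
    (lam : ℕ → EuclideanSpace ℝ (Fin m)) (mu : ℕ → EuclideanSpace ℝ (Fin M))
    (γ : ℕ → EuclideanSpace ℝ (Fin m)) (ν : ℕ → EuclideanSpace ℝ (Fin M))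
    (hx0 : ∀ i, x 0 i ∈ X i)
    (hγ : ∀ k, γ (k + 1) = lam k + ρ • ((∑ i, A i (x k i)) - b))
    (hν : ∀ k j, ν (k + 1) j = max 0 (mu k j + ρ * ∑ i, g j i (x k i)))
    (hxmem : ∀ k i, x (k + 1) i ∈ X i)
    (hxmin : ∀ k i, ∀ y ∈ X i,
      f i (x (k + 1) i) + (inner ℝ (γ (k + 1)) (A i (x (k + 1) i)) : ℝ)
          + (∑ j, ν (k + 1) j * g j i (x (k + 1) i))
          + 1 / (2 * ρ) * ‖x (k + 1) i - x k i‖ ^ 2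
        ≤ f i y + (inner ℝ (γ (k + 1)) (A i y) : ℝ) + (∑ j, ν (k + 1) j * g j i y)
          + 1 / (2 * ρ) * ‖y - x k i‖ ^ 2)
    (hlam : ∀ k, lam (k + 1) = lam k + ρ • ((∑ i, A i (x (k + 1) i)) - b))
    (hmu : ∀ k j, mu (k + 1) j = max 0 (mu k j + ρ * ∑ i, g j i (x (k + 1) i)))
    (hexists : ∃ (xs : ∀ i, EuclideanSpace ℝ (Fin (n i)))
        (ls : EuclideanSpace ℝ (Fin m)) (ms : EuclideanSpace ℝ (Fin M)),
      IsSaddlePoint f A b g X xs ls ms) :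
    ∃ (xinf : ∀ i, EuclideanSpace ℝ (Fin (n i)))
      (linf : EuclideanSpace ℝ (Fin m)) (minf : EuclideanSpace ℝ (Fin M)),
      IsSaddlePoint f A b g X xinf linf minf ∧
      (∀ i, Filter.Tendsto (fun k => x k i) Filter.atTop (nhds (xinf i))) ∧
      Filter.Tendsto lam Filter.atTop (nhds linf) ∧
      Filter.Tendsto mu Filter.atTop (nhds minf) := by
  obtain ⟨xs, ls, ms, hs⟩ := hexists
  have h1ε : 0 < 1 - ε := sub_pos.2 hε1
  have hNA : 0 < N * Amax := (div_pos_iff_of_pos_left h1ε).1 (hρ0.trans_le hρ2)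
  have hNL : 0 < N * Lmax := (div_pos_iff_of_pos_left h1ε).1 (hρ0.trans_le hρ3)
  have hA0 := pos_of_mul_pos_right hNA (Nat.cast_nonneg N)
  have hL0 := pos_of_mul_pos_right hNL (Nat.cast_nonneg N)
  have hP : IsPCPMIterate f A b g X ρ x lam mu γ ν :=
    ⟨fun | 0, i => hx0 i | k + 1, i => hxmem k i, hγ, hν, hxmin, hlam, hmu⟩
  obtain ⟨⟨xinf, linf, minf⟩, hsad, hlim⟩ := exists_tendsto_of_fejer sqDist_nonneg
    dist_le_sqrt_sqDist continuous_sqDist_left sqDist_self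
    (S := {s | IsSaddlePoint f A b g X s.1 s.2.1 s.2.2}) ⟨(xs, ls, ms), hs⟩
    (by positivity : 0 < ε / (ε + 2)) (z := fun k => (x k, lam k, mu k))
    (fun s hs k => hP.sqDist_succ_add_le hρ0 (fun i => (hX i).2) (fun i => (hf i).2)
      (fun j i => (hg j i).2) hLip hAmax hLmax hA0.le hL0.le hε0
      ((le_div_iff₀ (by positivity)).1 hρ1) ((le_div_iff₀ hNA).1 hρ2)
      ((le_div_iff₀ hNL).1 hρ3) hs k)
    fun _ _ h0 h1 => hP.isSaddlePoint_of_tendsto hρ0 hX hf hg h0 h1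
  exact ⟨xinf, linf, minf, hsad, tendsto_pi_nhds.1 hlim.fst_nhds, hlim.snd_nhds.fst_nhds,
    hlim.snd_nhds.snd_nhds⟩

/-- Theorem 1: global convergence of the N-block PCPM algorithm to a
saddle point of the Lagrangian. -/
theorem stmt_8 {N M m : ℕ} {n : Fin N → ℕ}
    (f : ∀ i, EuclideanSpace ℝ (Fin (n i)) → ℝ)
    (A : ∀ i, EuclideanSpace ℝ (Fin (n i)) →L[ℝ] EuclideanSpace ℝ (Fin m))
    (b : EuclideanSpace ℝ (Fin m))
    (g : Fin M → ∀ i, EuclideanSpace ℝ (Fin (n i)) → ℝ)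
    (X : ∀ i, Set (EuclideanSpace ℝ (Fin (n i))))
    (hX : ∀ i, IsClosed (X i) ∧ Convex ℝ (X i))
    (hf : ∀ i, Continuous (f i) ∧ ConvexOn ℝ Set.univ (f i))
    (hg : ∀ j i, Continuous (g j i) ∧ ConvexOn ℝ Set.univ (g j i))
    (Lc : Fin M → Fin N → ℝ)
    (hLip : ∀ j i, ∀ y ∈ X i, ∀ z ∈ X i, |g j i y - g j i z| ≤ Lc j i * ‖y - z‖)
    (Amax Lmax : ℝ) (hAmax : ∀ i, ‖A i‖ ≤ Amax) (hLmax : ∀ j i, Lc j i ≤ Lmax)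
    (ε : ℝ) (hε0 : 0 < ε) (hε1 : ε < 1)
    (ρ : ℝ) (hρ0 : 0 < ρ)
    (hρ1 : ρ ≤ (1 - ε) / (Amax + M * Lmax))
    (hρ2 : ρ ≤ (1 - ε) / (N * Amax))
    (hρ3 : ρ ≤ (1 - ε) / (N * Lmax))
    (x : ℕ → ∀ i, EuclideanSpace ℝ (Fin (n i)))
    (lam : ℕ → EuclideanSpace ℝ (Fin m)) (mu : ℕ → EuclideanSpace ℝ (Fin M))
    (γ : ℕ → EuclideanSpace ℝ (Fin m)) (ν : ℕ → EuclideanSpace ℝ (Fin M))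
    (hx0 : ∀ i, x 0 i ∈ X i) (hmu0 : ∀ j, 0 ≤ mu 0 j)
    (hγ : ∀ k, γ (k + 1) = lam k + ρ • ((∑ i, A i (x k i)) - b))
    (hν : ∀ k j, ν (k + 1) j = max 0 (mu k j + ρ * ∑ i, g j i (x k i)))
    (hxmem : ∀ k i, x (k + 1) i ∈ X i)
    (hxmin : ∀ k i, ∀ y ∈ X i,
      f i (x (k + 1) i) + (inner ℝ (γ (k + 1)) (A i (x (k + 1) i)) : ℝ)
          + (∑ j, ν (k + 1) j * g j i (x (k + 1) i))
          + 1 / (2 * ρ) * ‖x (k + 1) i - x k i‖ ^ 2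
        ≤ f i y + (inner ℝ (γ (k + 1)) (A i y) : ℝ) + (∑ j, ν (k + 1) j * g j i y)
          + 1 / (2 * ρ) * ‖y - x k i‖ ^ 2)
    (hlam : ∀ k, lam (k + 1) = lam k + ρ • ((∑ i, A i (x (k + 1) i)) - b))
    (hmu : ∀ k j, mu (k + 1) j = max 0 (mu k j + ρ * ∑ i, g j i (x (k + 1) i)))
    (hexists : ∃ (xs : ∀ i, EuclideanSpace ℝ (Fin (n i)))
        (ls : EuclideanSpace ℝ (Fin m)) (ms : EuclideanSpace ℝ (Fin M)),
      IsSaddlePoint f A b g X xs ls ms) :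
    ∃ (xinf : ∀ i, EuclideanSpace ℝ (Fin (n i)))
      (linf : EuclideanSpace ℝ (Fin m)) (minf : EuclideanSpace ℝ (Fin M)),
      IsSaddlePoint f A b g X xinf linf minf ∧
      (∀ i, Filter.Tendsto (fun k => x k i) Filter.atTop (nhds (xinf i))) ∧
      Filter.Tendsto lam Filter.atTop (nhds linf) ∧
      Filter.Tendsto mu Filter.atTop (nhds minf) :=
  stmt_8_general f A b g X hX hf hg Lc hLip Amax Lmax hAmax hLmax ε hε0 hε1 ρ hρ0 hρ1 hρ2 hρ3 x lam
    mu γ ν hx0 hγ hν hxmem hxmin hlam hmu hexists
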